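/- Let (R, m, k) be a Noetherian local ring, E the injective hull of the residue field k, and M a finitely generated R-module whose support is contained in {m} (equivalently, M has finite length). Then the natural Matlis double-duality map M → Hom_R(Hom_R(M, E), E) is an isomorphism. -/

import Mathlib

/-!
Applying `Hom(-, E)` twice to `0 → N → M → M ⧸ N → 0` gives an exact sequence
`0 → N** → M** → (M ⧸ N)** → 0` because `E` is injective, so by the four lemma surjectivity of
evaluation climbs a composition series and it suffices to treat the residue field `k`. There any
`φ : k → E` lands in the socle of `E`, which is `f k` because `E` is an essential extension of `k`;
hence `Hom(k, E) = R • f` and evaluation is onto. Injectivity holds for every `M`: a nonzero `x`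
gives `R x ≅ R ⧸ ann x ↠ k ↪ E`, which extends to `M`. A finite module supported at `m` has finite
length since `R ⧸ ann M` is Artinian.

`Module.Injective R E` only extends maps between modules in the universe of `E`; a module of
finite length is small there (its simple factors are copies of `k ⊆ E`), so one may shrink it.
-/

open IsLocalRing LinearMap

universe v w

section Evaluation

variable {R : Type*} [CommRing R] {E M N : Type*} [AddCommGroup E] [Module R E]
  [AddCommGroup M] [Module R M] [AddCommGroup N] [Module R N]

theorem lcomp_lcomp_comp_applyₗ (g : M →ₗ[R] N) :
    lcomp R E (lcomp R E g) ∘ₗ applyₗ = applyₗ ∘ₗ g := rfl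

theorem lcomp_bijective_of_bijective {g : M →ₗ[R] N} (hg : Function.Bijective g) :
    Function.Bijective (lcomp R E g) := by
  refine ⟨lcomp_injective_of_surjective g hg.2,
    fun φ => ⟨φ ∘ₗ (LinearEquiv.ofBijective g hg).symm, ?_⟩⟩
  ext x
  simp

theorem applyₗ_bijective_of_linearEquiv (e : M ≃ₗ[R] N)
    (h : Function.Bijective (applyₗ : M →ₗ[R] (M →ₗ[R] E) →ₗ[R] E)) :
    Function.Bijective (applyₗ : N →ₗ[R] (N →ₗ[R] E) →ₗ[R] E) := by
  have hD := lcomp_bijective_of_bijective (E := E)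
    (lcomp_bijective_of_bijective (E := E) e.bijective)
  rw [← Function.Bijective.of_comp_iff _ e.bijective, ← LinearEquiv.coe_coe, ← coe_comp,
    ← lcomp_lcomp_comp_applyₗ, coe_comp]
  exact hD.comp h

end Evaluation

section Injective

variable {R : Type*} [CommRing R] {E : Type v} [AddCommGroup E] [Module R E]
  (hE : Module.Injective R E)
include hE

theorem lcomp_surjective_of_injective {X Y : Type v} [AddCommGroup X] [Module R X]
    [AddCommGroup Y] [Module R Y] {g : X →ₗ[R] Y} (hg : Function.Injective g) :
    Function.Surjective (lcomp R E g) := by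
  intro φ
  obtain ⟨ψ, hψ⟩ := hE.out g hg φ
  exact ⟨ψ, LinearMap.ext hψ⟩

theorem applyₗ_surjective_of_submodule {M : Type v} [AddCommGroup M] [Module R M]
    (N : Submodule R M)
    (hN : Function.Surjective (applyₗ : N →ₗ[R] (N →ₗ[R] E) →ₗ[R] E))
    (hQ : Function.Surjective (applyₗ : (M ⧸ N) →ₗ[R] ((M ⧸ N) →ₗ[R] E) →ₗ[R] E)) :
    Function.Surjective (applyₗ : M →ₗ[R] (M →ₗ[R] E) →ₗ[R] E) := by
  have hdual : Function.Exact (lcomp R E N.mkQ) (lcomp R E N.subtype) :=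
    exact_lcomp_of_exact_of_surjective E (exact_subtype_mkQ N) N.mkQ_surjective
  have hbidual :
      Function.Exact (lcomp R E (lcomp R E N.subtype)) (lcomp R E (lcomp R E N.mkQ)) :=
    exact_lcomp_of_exact_of_surjective E hdual
      (lcomp_surjective_of_injective hE N.injective_subtype)
  have hbidual_surj : Function.Surjective (lcomp R E (lcomp R E N.mkQ)) :=
    lcomp_surjective_of_injective hE (lcomp_injective_of_surjective _ N.mkQ_surjective)
  -- four lemma: rows `N → M → M ⧸ N → 0` and `N** → M** → (M ⧸ N)** → 0`, columns `applyₗ`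
  exact surjective_of_surjective_of_surjective_of_injective N.subtype N.mkQ (0 : _ →ₗ[R] Unit)
    (lcomp R E (lcomp R E N.subtype)) (lcomp R E (lcomp R E N.mkQ)) (0 : _ →ₗ[R] Unit)
    applyₗ applyₗ applyₗ (0 : Unit →ₗ[R] Unit) rfl rfl (by simp)
    ((exact_zero_iff_surjective _ _).mpr N.mkQ_surjective) hbidual
    ((exact_zero_iff_surjective _ _).mpr hbidual_surj) hN hQ (fun _ _ _ => rfl)

end Injective

section LocalRing

variable {R : Type*} [CommRing R] [IsLocalRing R]

theorem nonempty_linearEquiv_quotient_maximalIdeal (S : Type*) [AddCommGroup S] [Module R S]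
    [IsSimpleModule R S] : Nonempty (S ≃ₗ[R] R ⧸ maximalIdeal R) := by
  obtain ⟨I, hI, he⟩ := isSimpleModule_iff_quot_maximal.mp ‹IsSimpleModule R S›
  rwa [← eq_maximalIdeal hI]

theorem IsFiniteLength.small [Small.{w} (R ⧸ maximalIdeal R)] {M : Type*} [AddCommGroup M]
    [Module R M] (hM : IsFiniteLength R M) : Small.{w} M := by
  induction hM with
  | of_subsingleton => infer_instance
  | @of_simple_quotient M _ _ N _ _ ih =>
    obtain ⟨e⟩ := nonempty_linearEquiv_quotient_maximalIdeal (R := R) (M ⧸ N)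
    have : Small.{w} (M ⧸ N) := small_of_injective e.injective
    have : Small.{w} ((M ⧸ N.toAddSubgroup) × N.toAddSubgroup) :=
      inferInstanceAs (Small.{w} ((M ⧸ N) × N))
    exact small_map (AddSubgroup.addGroupEquivQuotientProdAddSubgroup (s := N.toAddSubgroup))

theorem maximalIdeal_mem_minimalPrimes_annihilator {M : Type*} [AddCommGroup M] [Module R M]
    [Module.Finite R M] [Nontrivial M] (hsupp : Module.support R M ⊆ {closedPoint R}) :
    maximalIdeal R ∈ (Module.annihilator R M).minimalPrimes := by
  refine ⟨⟨inferInstance, le_maximalIdeal ?_⟩, fun q ⟨hq, hannq⟩ _ => ?_⟩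
  · rw [Ne, Module.annihilator_eq_top_iff]
    exact not_subsingleton M
  · have hq_supp : (⟨q, hq⟩ : PrimeSpectrum R) ∈ Module.support R M := by
      rwa [Module.support_eq_zeroLocus]
    exact (congrArg PrimeSpectrum.asIdeal (hsupp hq_supp)).ge

theorem isFiniteLength_of_support_subset [IsNoetherianRing R] {M : Type*} [AddCommGroup M]
    [Module R M] [Module.Finite R M] (hsupp : Module.support R M ⊆ {closedPoint R}) :
    IsFiniteLength R M := by
  rcases subsingleton_or_nontrivial M with _ | _
  · exact .of_subsingleton
  have := quotient_artinian_of_mem_minimalPrimes_of_isLocalRing _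
    (maximalIdeal_mem_minimalPrimes_annihilator hsupp)
  let _ : Module (R ⧸ Module.annihilator R M) M := Module.quotientAnnihilator
  have : Module.Finite (R ⧸ Module.annihilator R M) M :=
    Module.Finite.of_restrictScalars_finite R _ M
  have : IsArtinian R M := isArtinian_of_surjective_algebraMap
    (R := R ⧸ Module.annihilator R M) Ideal.Quotient.mk_surjective
  exact isFiniteLength_iff_isNoetherian_isArtinian.mpr ⟨inferInstance, this⟩

end LocalRing

section InjectiveHull

variable {R : Type*} [CommRing R] [IsLocalRing R] {E : Type v} [AddCommGroup E] [Module R E]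
  {f : (R ⧸ maximalIdeal R) →ₗ[R] E}

theorem mem_range_of_maximalIdeal_smul_eq_zero
    (hess : ∀ N : Submodule R E, N ≠ ⊥ → N ⊓ LinearMap.range f ≠ ⊥)
    {x : E} (hx : ∀ r ∈ maximalIdeal R, r • x = 0) : x ∈ LinearMap.range f := by
  rcases eq_or_ne x 0 with rfl | hx0
  · exact zero_mem _
  obtain ⟨y, ⟨hyx, hyf⟩, hy0⟩ := (Submodule.ne_bot_iff _).mp
    (hess (R ∙ x) (by simpa [Submodule.span_singleton_eq_bot] using hx0))
  obtain ⟨r, rfl⟩ := Submodule.mem_span_singleton.mp hyx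
  obtain ⟨u, rfl⟩ := notMem_maximalIdeal.mp fun hr => hy0 (hx r hr)
  simpa using Submodule.smul_mem _ (↑u⁻¹ : R) hyf

theorem exists_eq_smul_of_residueField
    (hess : ∀ N : Submodule R E, N ≠ ⊥ → N ⊓ LinearMap.range f ≠ ⊥)
    (φ : (R ⧸ maximalIdeal R) →ₗ[R] E) : ∃ c : R, φ = c • f := by
  obtain ⟨c, hc⟩ := mem_range_of_maximalIdeal_smul_eq_zero hess
    (x := φ (Submodule.Quotient.mk 1))
    fun r hr => by
      rw [← map_smul, Module.mem_annihilator.mp (Ideal.annihilator_quotient.ge hr), map_zero]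
  obtain ⟨c, rfl⟩ := Submodule.Quotient.mk_surjective _ c
  refine ⟨c, ?_⟩
  ext
  rw [comp_apply, comp_apply, LinearMap.smul_apply, Submodule.mkQ_apply, ← hc, ← map_smul,
    ← Submodule.Quotient.mk_smul, smul_eq_mul, mul_one]

theorem applyₗ_bijective_residueField (hf : Function.Injective f)
    (hess : ∀ N : Submodule R E, N ≠ ⊥ → N ⊓ LinearMap.range f ≠ ⊥) :
    Function.Bijective (applyₗ : (R ⧸ maximalIdeal R) →ₗ[R] _ →ₗ[R] E) := by
  refine ⟨fun a b hab => hf (LinearMap.congr_fun hab f), fun F => ?_⟩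
  obtain ⟨a, ha⟩ := mem_range_of_maximalIdeal_smul_eq_zero hess (x := F f) fun r hr => by
    have hrf : r • f = 0 := LinearMap.ext fun y => by
      rw [LinearMap.smul_apply, ← map_smul, Module.mem_annihilator.mp
        (Ideal.annihilator_quotient.ge hr) y, map_zero, LinearMap.zero_apply]
    rw [← map_smul, hrf, map_zero]
  refine ⟨a, LinearMap.ext fun φ => ?_⟩
  obtain ⟨c, rfl⟩ := exists_eq_smul_of_residueField hess φ
  simp [ha]

theorem exists_apply_ne_zero_of_ne_zero (hE : Module.Injective R E) (hf : Function.Injective f)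
    {M : Type v} [AddCommGroup M] [Module R M] {x : M} (hx : x ≠ 0) :
    ∃ φ : M →ₗ[R] E, φ x ≠ 0 := by
  have hle : Ideal.torsionOf R M x ≤ maximalIdeal R :=
    le_maximalIdeal ((Ideal.torsionOf_eq_top_iff (R := R) x).not.mpr hx)
  obtain ⟨φ, hφ⟩ := hE.out (R ∙ x).subtype (R ∙ x).injective_subtype
    (f ∘ₗ Submodule.factor hle ∘ₗ (Ideal.quotTorsionOfEquivSpanSingleton R M x).symm)
  have hx1 : (Ideal.quotTorsionOfEquivSpanSingleton R M x).symm
      ⟨x, Submodule.mem_span_singleton_self x⟩ = Submodule.Quotient.mk 1 := by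
    rw [LinearEquiv.symm_apply_eq, Ideal.quotTorsionOfEquivSpanSingleton_apply_mk, one_smul]
  have hφx : φ x = f 1 := by simpa [hx1] using hφ ⟨x, Submodule.mem_span_singleton_self x⟩
  exact ⟨φ, hφx ▸ (map_ne_zero_iff f hf).mpr one_ne_zero⟩

theorem applyₗ_injective (hE : Module.Injective R E) (hf : Function.Injective f)
    (M : Type v) [AddCommGroup M] [Module R M] :
    Function.Injective (applyₗ : M →ₗ[R] (M →ₗ[R] E) →ₗ[R] E) := by
  rw [← ker_eq_bot, Submodule.eq_bot_iff]
  intro x hx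
  by_contra hx0
  obtain ⟨φ, hφ⟩ := exists_apply_ne_zero_of_ne_zero hE hf hx0
  exact hφ (LinearMap.congr_fun hx φ)

theorem applyₗ_surjective_of_isFiniteLength (hE : Module.Injective R E)
    (hf : Function.Injective f)
    (hess : ∀ N : Submodule R E, N ≠ ⊥ → N ⊓ LinearMap.range f ≠ ⊥)
    {M : Type v} [AddCommGroup M] [Module R M] (hM : IsFiniteLength R M) :
    Function.Surjective (applyₗ : M →ₗ[R] (M →ₗ[R] E) →ₗ[R] E) := by
  induction hM with
  | of_subsingleton => exact Function.surjective_to_subsingleton _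
  | @of_simple_quotient M _ _ N _ _ ih =>
    obtain ⟨e⟩ := nonempty_linearEquiv_quotient_maximalIdeal (R := R) (M ⧸ N)
    exact applyₗ_surjective_of_submodule hE N ih
      (applyₗ_bijective_of_linearEquiv e.symm (applyₗ_bijective_residueField hf hess)).2

theorem applyₗ_bijective_of_isFiniteLength (hE : Module.Injective R E)
    (hf : Function.Injective f)
    (hess : ∀ N : Submodule R E, N ≠ ⊥ → N ⊓ LinearMap.range f ≠ ⊥)
    {M : Type*} [AddCommGroup M] [Module R M] (hM : IsFiniteLength R M) :
    Function.Bijective (applyₗ : M →ₗ[R] (M →ₗ[R] E) →ₗ[R] E) := by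
  have : Small.{v} (R ⧸ maximalIdeal R) := small_of_injective hf
  have : Small.{v} M := hM.small
  let e := Shrink.linearEquiv R M
  exact applyₗ_bijective_of_linearEquiv e ⟨applyₗ_injective hE hf _,
    applyₗ_surjective_of_isFiniteLength hE hf hess (e.symm.isFiniteLength hM)⟩

end InjectiveHull

/-- Matlis double duality: over a Noetherian local ring `(R, m, k)`, with `E` an
injective hull of the residue field `k` and `M` a finitely generated module
supported at `m`, the evaluation map `M → Hom_R(Hom_R(M, E), E)` is bijective. -/
theorem matlis_double_duality {R : Type*} [CommRing R] [IsNoetherianRing R]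
    [IsLocalRing R] (E : Type*) [AddCommGroup E] [Module R E]
    -- `E` is injective
    (hE : Module.Injective R E)
    -- `E` contains the residue field `k = R/m` ...
    (f : (R ⧸ IsLocalRing.maximalIdeal R) →ₗ[R] E) (hf : Function.Injective f)
    -- ... as an essential submodule, i.e. `E` is an injective hull of `k`
    (hess : ∀ N : Submodule R E, N ≠ ⊥ → N ⊓ LinearMap.range f ≠ ⊥)
    (M : Type*) [AddCommGroup M] [Module R M] [Module.Finite R M]
    (hsupp : Module.support R M ⊆
      {⟨IsLocalRing.maximalIdeal R, Ideal.IsMaximal.isPrime' _⟩}) :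
    Function.Bijective
      ((LinearMap.id : (M →ₗ[R] E) →ₗ[R] (M →ₗ[R] E)).flip) :=
  applyₗ_bijective_of_isFiniteLength hE hf hess (isFiniteLength_of_support_subset hsupp)
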